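/- arXiv:2406.17217 — 2 statements merged into one kernel-verified Lean document; each statement's English description precedes it below -/
import Mathlib

section
/- Let X be a Hausdorff topological semigroup (a semigroup with a topology making multiplication continuous). Then X contains an idempotent (an element e with e·e = e) if and only if there exist x ∈ X and a free ultrafilter p on ℕ such that the double sequence f(n,m) = x^{m−n} (the (m−n)-th power of x, for n < m) has a p²-limit in X. -/
/-- An ultrafilter on ℕ is free (nonprincipal) if it contains no finite set. -/
def IsFree (p : Ultrafilter ℕ) : Prop := ∀ A : Set ℕ, A.Finite → A ∉ p

/-- The Fubini product `p ⊗ q` of ultrafilters on ℕ: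
`A ∈ p ⊗ q ↔ {n | {m | (n, m) ∈ A} ∈ q} ∈ p`. -/
def fubini (p q : Ultrafilter ℕ) : Ultrafilter (ℕ × ℕ) :=
  p.bind fun n => q.map fun m => (n, m)

/-- `x` is the p²-limit of the double sequence `f`. -/
def IsP2Limit {X : Type*} [TopologicalSpace X] (p : Ultrafilter ℕ) (f : ℕ → ℕ → X) (x : X) :
    Prop :=
  ∀ U : Set X, IsOpen U → x ∈ U → {z : ℕ × ℕ | z.1 < z.2 ∧ f z.1 z.2 ∈ U} ∈ fubini p p

/-- `spow x k = x^(k+1)`, the `(k+1)`-fold product of `x` in a semigroup. -/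
def spow {X : Type*} [Semigroup X] (x : X) : ℕ → X
  | 0 => x
  | k + 1 => spow x k * x

lemma mem_fubini (p q : Ultrafilter ℕ) (A : Set (ℕ × ℕ)) :
    A ∈ fubini p q ↔ {n | {m | (n, m) ∈ A} ∈ q} ∈ p := by
  have : A ∈ Filter.bind (↑p)
      (fun n => ((q.map fun m => (n, m) : Ultrafilter (ℕ × ℕ)) : Filter (ℕ × ℕ))) ↔
      {n | {m | (n, m) ∈ A} ∈ q} ∈ p := by
    rw [Filter.mem_bind']
    simp [Set.preimage]
  exact this

lemma spow_add {X : Type*} [Semigroup X] (x : X) (a b : ℕ) :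
    spow x a * spow x b = spow x (a + b + 1) := by
  induction b with
  | zero => rfl
  | succ b ih =>
    show spow x a * (spow x b * x) = spow x (a + b + 1) * x
    rw [← mul_assoc, ih]

/-- A Hausdorff topological semigroup has an idempotent iff the double sequence
`(n, m) ↦ x^(m-n)` has a `p²`-limit for some `x` and some free ultrafilter `p`. -/
theorem idempotent_iff_p2_limit {X : Type*} [Semigroup X] [TopologicalSpace X]
    [T2Space X] [ContinuousMul X] :
    (∃ e : X, e * e = e) ↔
      ∃ (x : X) (p : Ultrafilter ℕ), IsFree p ∧
        ∃ y : X, IsP2Limit p (fun n m => spow x (m - n - 1)) y := by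
  constructor
  · rintro ⟨e, he⟩
    have hpow : ∀ k, spow e k = e := by
      intro k
      induction k with
      | zero => rfl
      | succ k ih => show spow e k * e = e; rw [ih, he]
    refine ⟨e, Filter.hyperfilter ℕ, fun A hA => Filter.notMem_hyperfilter_of_finite hA, e,
      fun U hU heU => ?_⟩
    rw [mem_fubini]
    have : ∀ n : ℕ, {m | n < m ∧ (fun n m => spow e (m - n - 1)) n m ∈ U} ∈
        Filter.hyperfilter ℕ := by
      intro n
      have h1 : {m : ℕ | n < m} ∈ Filter.hyperfilter ℕ := by
        rw [← Ultrafilter.compl_notMem_iff]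
        apply Filter.notMem_hyperfilter_of_finite
        have : {m : ℕ | n < m}ᶜ = Set.Iic n := by ext m; simp [Nat.not_lt]
        rw [this]; exact Set.finite_Iic n
      filter_upwards [h1] with m hm
      exact ⟨hm, by simpa [hpow] using heU⟩
    filter_upwards with n
    exact this n
  · rintro ⟨x, p, -, y, hy⟩
    refine ⟨y, ?_⟩
    by_contra hne
    obtain ⟨V, U, hV, hU, hyyV, hyU, hVU⟩ := t2_separation hne
    -- find open W ∋ y with W * W ⊆ V
    have hc : Continuous fun z : X × X => z.1 * z.2 := continuous_mul
    have hpre : IsOpen ((fun z : X × X => z.1 * z.2) ⁻¹' V) := hV.preimage hc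
    have hyy : (y, y) ∈ (fun z : X × X => z.1 * z.2) ⁻¹' V := hyyV
    obtain ⟨u, v, hu, hv, hyu, hyv, huv⟩ := isOpen_prod_iff.mp hpre y y hyy
    set W := u ∩ v ∩ U with hW
    have hWopen : IsOpen W := ((hu.inter hv).inter hU)
    have hyW : y ∈ W := ⟨⟨hyu, hyv⟩, hyU⟩
    have hWW : ∀ a b : X, a ∈ W → b ∈ W → a * b ∈ V := fun a b ha hb =>
      huv (Set.mk_mem_prod ha.1.1 hb.1.2)
    have hmem := hy W hWopen hyW
    rw [mem_fubini] at hmem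
    set C : ℕ → Set ℕ := fun n => {m | n < m ∧ spow x (m - n - 1) ∈ W} with hC
    have hB : {n | C n ∈ p} ∈ p := hmem
    obtain ⟨n, hn⟩ := Ultrafilter.nonempty_of_mem hB
    obtain ⟨m, hmC, hmB⟩ := Ultrafilter.nonempty_of_mem (Filter.inter_mem hn hB)
    obtain ⟨k, hk1, hk2⟩ := Ultrafilter.nonempty_of_mem (Filter.inter_mem hmB hn)
    -- hmC : m ∈ C n, hk1 : k ∈ C m, hk2 : k ∈ C n
    obtain ⟨hnm, hxnm⟩ := hmC
    obtain ⟨hmk, hxmk⟩ := hk1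
    obtain ⟨hnk, hxnk⟩ := hk2
    have harith : (m - n - 1) + (k - m - 1) + 1 = k - n - 1 := by omega
    have : spow x (k - n - 1) ∈ V := by
      rw [← harith, ← spow_add]
      exact hWW _ _ hxnm hxmk
    have hdisj : spow x (k - n - 1) ∈ V ∩ U := ⟨this, hxnk.2⟩
    rw [Set.disjoint_iff_inter_eq_empty.mp hVU] at hdisj
    exact hdisj
end

section
/- Every Ramsey ultrafilter u on ℕ is (βω,2)-discrete: for every injective double sequence f in βω (i.e., f(n,m) ∈ Ultrafilter ℕ defined for n < m, with f injective on pairs), there exists M ∈ u such that {f(n,m) : n < m and n, m ∈ M} is a discrete subset of βω. -/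
set_option maxHeartbeats 1000000


/-- A free ultrafilter `u` on ℕ is Ramsey if for every partition `{P n : n ∈ ℕ}` of ℕ,
either some `P i ∈ u`, or there is `U ∈ u` meeting each `P n` in at most one point. -/
def IsRamsey (u : Ultrafilter ℕ) : Prop :=
  IsFree u ∧ ∀ P : ℕ → Set ℕ, (Pairwise fun i j => Disjoint (P i) (P j)) →
    (⋃ i, P i) = Set.univ →
    (∃ i, P i ∈ u) ∨ ∃ U ∈ u, ∀ n, (U ∩ P n).Subsingleton

/-- A subset `D` of a topological space is discrete if every point of `D` has an open
neighborhood meeting `D` only in that point. -/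
def IsDiscreteSubset {Y : Type*} [TopologicalSpace Y] (D : Set Y) : Prop :=
  ∀ d ∈ D, ∃ U : Set Y, IsOpen U ∧ U ∩ D = {d}

lemma ramsey_fibers (u : Ultrafilter ℕ) (hu : IsRamsey u) (G : ℕ → ℕ) :
    (∃ i, {m | G m = i} ∈ u) ∨ ∃ S ∈ u, ∀ n, (S ∩ {m | G m = n}).Subsingleton := by
  apply hu.2 (fun n => {m | G m = n})
  · intro i j hij
    rw [Set.disjoint_left]
    intro m hmi hmj
    exact hij (hmi.symm.trans hmj)
  · ext m
    simp only [Set.mem_iUnion, Set.mem_setOf_eq, Set.mem_univ, iff_true]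
    exact ⟨G m, rfl⟩

lemma ramsey_diag (u : Ultrafilter ℕ) (hu : IsRamsey u) (Y : ℕ → Set ℕ) (hY : ∀ n, Y n ∈ u) :
    ∃ M ∈ u, ∀ n ∈ M, ∀ m ∈ M, n < m → m ∈ Y n := by
  classical
  set Y' : ℕ → Set ℕ := fun n => ⋂ k ∈ Finset.range (n+1), Y k with hY'def
  have hY'mem : ∀ n, Y' n ∈ u := fun n => (Filter.biInter_finset_mem _).mpr (fun k _ => hY k)
  have hY'sub : ∀ n, Y' n ⊆ Y n := by
    intro n m hm
    simp only [hY'def, Set.mem_iInter] at hm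
    exact hm n (Finset.self_mem_range_succ n)
  set G : ℕ → ℕ := fun m => if h : ∃ k, m ∉ Y' k then Nat.find h + 1 else 0 with hGdef
  have hGmem : ∀ m n, (G m = 0 ∨ n + 2 ≤ G m) → m ∈ Y' n := by
    intro m n hc
    by_cases h : ∃ k, m ∉ Y' k
    · rcases hc with hc | hc
      · simp [hGdef, h] at hc
      · have hG : G m = Nat.find h + 1 := by simp [hGdef, h]
        rw [hG] at hc
        have : n < Nat.find h := by omega
        have := Nat.find_min h this
        simpa using this
    · push_neg at h; exact h n
  have hGnot : ∀ m n, G m = n + 1 → m ∉ Y' n := by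
    intro m n hG
    by_cases h : ∃ k, m ∉ Y' k
    · have hG' : G m = Nat.find h + 1 := by simp [hGdef, h]
      have : Nat.find h = n := by omega
      rw [← this]
      exact Nat.find_spec h
    · simp [hGdef, h] at hG
  rcases ramsey_fibers u hu G with ⟨i, hi⟩ | ⟨S, hS, hSsub⟩
  · match i with
    | 0 =>
      refine ⟨{m | G m = 0}, hi, fun n hn m hm hnm => ?_⟩
      exact hY'sub n (hGmem m n (Or.inl hm))
    | (j+1) =>
      exfalso
      have h1 : {m | G m = j + 1} ⊆ (Y' j)ᶜ := fun m hm => hGnot m j hm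
      have h2 : (Y' j)ᶜ ∈ u := Filter.mem_of_superset hi h1
      exact (Filter.empty_notMem (u : Filter ℕ)) (by simpa using u.inter_mem h2 (hY'mem j))
  · -- bound function
    have hbnd : ∀ t : ℕ, ∃ b, ∀ m ∈ S, G m ≤ t → m < b := by
      intro t
      have hfin : {m | m ∈ S ∧ G m ≤ t}.Finite := by
        have hsub : {m | m ∈ S ∧ G m ≤ t} ⊆ ⋃ j ∈ Finset.range (t+1), (S ∩ {m | G m = j}) := by
          intro m ⟨hm1, hm2⟩
          simp only [Set.mem_iUnion]
          exact ⟨G m, by simp [Nat.lt_succ_iff, hm2], hm1, rfl⟩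
        exact (Set.Finite.biUnion (Finset.range (t+1)).finite_toSet
          (fun j _ => (hSsub j).finite)).subset hsub
      rcases hfin.bddAbove with ⟨b, hb⟩
      exact ⟨b + 1, fun m hm1 hm2 => Nat.lt_succ_of_le (hb ⟨hm1, hm2⟩)⟩
    choose bnd hbnd using hbnd
    set a : ℕ → ℕ := fun k => Nat.rec 0 (fun _ ak => max (ak+1) (bnd ak)) k with hadef
    have haS : ∀ k, a (k+1) = max (a k + 1) (bnd (a k)) := fun k => rfl
    have hamono : StrictMono a := strictMono_nat_of_lt_succ
      (fun k => lt_of_lt_of_le (Nat.lt_succ_self _) (le_max_left _ _))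
    have hak : ∀ k, k ≤ a k := by
      intro k
      induction k with
      | zero => exact Nat.zero_le _
      | succ k ih =>
        have := haS k
        have h2 : a k + 1 ≤ a (k+1) := by rw [this]; exact le_max_left _ _
        omega
    set L : ℕ → ℕ := fun m => Nat.findGreatest (fun k => a k ≤ m) m with hLdef
    have hL1 : ∀ m, a (L m) ≤ m := fun m =>
      Nat.findGreatest_spec (P := fun k => a k ≤ m) (Nat.zero_le m) (Nat.zero_le m)
    have hL2 : ∀ m, m < a (L m + 1) := by
      intro m
      by_contra h
      push_neg at h
      have hk : L m + 1 ≤ m := le_trans (hak _) h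
      have h2 : L m + 1 ≤ L m := by
        simpa only [hLdef] using Nat.le_findGreatest (P := fun k => a k ≤ m) hk h
      omega
    have hLmono : Monotone L := by
      intro n m hnm
      exact Nat.le_findGreatest (P := fun k => a k ≤ m)
        (le_trans (Nat.findGreatest_le n) hnm) (le_trans (hL1 n) hnm)
    rcases ramsey_fibers u hu L with ⟨i, hi⟩ | ⟨V, hV, hVsub⟩
    · exfalso
      have hsub : {m | L m = i} ⊆ Set.Iio (a (i+1)) := by
        intro m hm
        have := hL2 m
        rw [hm] at this
        exact this
      exact hu.1 (Set.Iio (a (i+1))) (Set.finite_Iio _) (Filter.mem_of_superset hi hsub)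
    · have key : ∀ W ∈ u, (∀ n ∈ W, ∀ m ∈ W, L n ≠ L m → L n + 2 ≤ L m ∨ L m + 2 ≤ L n) →
          ∃ M ∈ u, ∀ n ∈ M, ∀ m ∈ M, n < m → m ∈ Y n := by
        intro W hW hWpar
        refine ⟨S ∩ V ∩ W, u.inter_mem (u.inter_mem hS hV) hW, ?_⟩
        rintro n ⟨⟨hnS, hnV⟩, hnW⟩ m ⟨⟨hmS, hmV⟩, hmW⟩ hnm
        have hij : L n ≤ L m := hLmono (le_of_lt hnm)
        have hne : L n ≠ L m := by
          intro he
          have := hVsub (L n) ⟨hnV, rfl⟩ ⟨hmV, he.symm⟩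
          omega
        have hj2 : L n + 2 ≤ L m := by
          rcases hWpar n hnW m hmW hne with h | h
          · exact h
          · omega
        have hmb : bnd (a (L n + 1)) ≤ m := by
          have h1 : bnd (a (L n + 1)) ≤ a (L n + 2) := by
            rw [show L n + 2 = (L n + 1) + 1 from rfl, haS]
            exact le_max_right _ _
          exact le_trans h1 (le_trans (hamono.monotone hj2) (hL1 m))
        have hGm : a (L n + 1) + 1 ≤ G m := by
          by_contra h
          push_neg at h
          have := hbnd (a (L n + 1)) m hmS (by omega)
          omega
        have hn' : n + 1 ≤ a (L n + 1) := hL2 n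
        exact hY'sub n (hGmem m n (Or.inr (by omega)))
      rcases u.mem_or_compl_mem {m | Even (L m)} with hpar | hpar
      · refine key _ hpar ?_
        intro n hn m hm hne
        rcases hn with ⟨x, hx⟩
        rcases hm with ⟨y, hy⟩
        omega
      · refine key _ hpar ?_
        intro n hn m hm hne
        simp only [Set.mem_compl_iff, Set.mem_setOf_eq, Nat.not_even_iff_odd] at hn hm
        rcases hn with ⟨x, hx⟩
        rcases hm with ⟨y, hy⟩
        omega


section Aux

open scoped Classical

lemma ultra_exists_sep {x y : Ultrafilter ℕ} (h : x ≠ y) : ∃ S, S ∈ x ∧ S ∉ y := by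
  by_contra hc
  push_neg at hc
  exact h (Ultrafilter.coe_le_coe.mp fun s hs => hc s hs).symm

/-- A set in `x` but not in `y` (if `x ≠ y`), else `univ`. -/
noncomputable def usep (x y : Ultrafilter ℕ) : Set ℕ :=
  if h : ∃ S, S ∈ x ∧ S ∉ y then Classical.choose h else Set.univ

lemma usep_mem (x y : Ultrafilter ℕ) : usep x y ∈ x := by
  unfold usep
  by_cases h : ∃ S, S ∈ x ∧ S ∉ y
  · rw [dif_pos h]
    exact (Classical.choose_spec h).1
  · rw [dif_neg h]
    exact Filter.univ_mem

lemma usep_notMem {x y : Ultrafilter ℕ} (h : x ≠ y) : usep x y ∉ y := by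
  unfold usep
  rw [dif_pos (ultra_exists_sep h)]
  exact (Classical.choose_spec (ultra_exists_sep h)).2

variable (u : Ultrafilter ℕ) (f : ℕ → ℕ → Ultrafilter ℕ)

/-- `zz n` is the limit of `f n m` as `m → u`. -/
noncomputable def zz (n : ℕ) : Ultrafilter ℕ := u.bind (f n)

/-- `ww` is the limit of `zz n` as `n → u`. -/
noncomputable def ww : Ultrafilter ℕ := u.bind (zz u f)

lemma mem_zz {s : Set ℕ} {n : ℕ} : s ∈ zz u f n ↔ {m | s ∈ f n m} ∈ u := Iff.rfl

lemma mem_ww {s : Set ℕ} : s ∈ ww u f ↔ {n | s ∈ zz u f n} ∈ u := Iff.rfl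

/-- The basic separating set for the pair `(a, m)`, `a < m`. -/
noncomputable def CC (a m : ℕ) : Set ℕ :=
  (⋂ a' ∈ Finset.range m, (if a' = a then Set.univ else
     usep (f a m) (f a' m) ∩ (usep (f a' m) (f a m))ᶜ)) ∩
  ((⋂ k ∈ Finset.range (m+1), usep (f a m) (zz u f k)) ∩ usep (f a m) (ww u f))

variable {u f}
variable (hinj : ∀ n m n' m' : ℕ, n < m → n' < m' → f n m = f n' m' → n = n' ∧ m = m')

include hinj in
lemma CC_mem (ha : a < m) : CC u f a m ∈ f a m := by
  refine Filter.inter_mem ((Filter.biInter_finset_mem _).mpr fun a' ha' => ?_)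
    (Filter.inter_mem ((Filter.biInter_finset_mem _).mpr fun k _ => usep_mem _ _)
      (usep_mem _ _))
  split
  · exact Filter.univ_mem
  · rename_i hne
    have hne' : f a' m ≠ f a m := by
      intro he
      exact hne ((hinj a' m a m (Finset.mem_range.mp ha') ha he).1)
    exact Filter.inter_mem (usep_mem _ _)
      ((Ultrafilter.compl_mem_iff_notMem).mpr (usep_notMem hne'))

lemma CC_disj (ha : a < m) (ha' : a' < m) (hne : a ≠ a') :
    CC u f a m ∩ CC u f a' m = ∅ := by
  have h1 : CC u f a m ⊆ usep (f a m) (f a' m) ∩ (usep (f a' m) (f a m))ᶜ := by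
    refine Set.Subset.trans (Set.inter_subset_left) ?_
    intro x hx
    have := Set.mem_iInter₂.mp hx a' (Finset.mem_range.mpr ha')
    rwa [if_neg (Ne.symm hne)] at this
  have h2 : CC u f a' m ⊆ usep (f a' m) (f a m) ∩ (usep (f a m) (f a' m))ᶜ := by
    refine Set.Subset.trans (Set.inter_subset_left) ?_
    intro x hx
    have := Set.mem_iInter₂.mp hx a (Finset.mem_range.mpr ha)
    rwa [if_neg hne] at this
  ext x
  simp only [Set.mem_inter_iff, Set.mem_empty_iff_false, iff_false]
  rintro ⟨hx1, hx2⟩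
  have := h1 hx1
  have := h2 hx2
  simp only [Set.mem_inter_iff, Set.mem_compl_iff] at *
  tauto

lemma CC_not_zz (hk : k ≤ m) (h : zz u f k ≠ f a m) : CC u f a m ∉ zz u f k := by
  intro hmem
  have hsub : CC u f a m ⊆ usep (f a m) (zz u f k) := by
    refine Set.Subset.trans Set.inter_subset_right ?_
    refine Set.Subset.trans Set.inter_subset_left ?_
    intro x hx
    exact Set.mem_iInter₂.mp hx k (Finset.mem_range.mpr (Nat.lt_succ_of_le hk))
  exact usep_notMem (Ne.symm h) (Filter.mem_of_superset hmem hsub)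

lemma CC_not_ww (h : f a m ≠ ww u f) : CC u f a m ∉ ww u f := by
  intro hmem
  have hsub : CC u f a m ⊆ usep (f a m) (ww u f) :=
    Set.Subset.trans Set.inter_subset_right Set.inter_subset_right
  exact usep_notMem h (Filter.mem_of_superset hmem hsub)

variable (u f) in
/-- Union of the separating sets over pairs from `s`. -/
noncomputable def BB (s : Finset ℕ) : Set ℕ :=
  ⋃ q ∈ {q : ℕ × ℕ | q.1 ∈ s ∧ q.2 ∈ s ∧ q.1 < q.2}, CC u f q.1 q.2

lemma mem_BB_iff {s : Finset ℕ} (v : Ultrafilter ℕ) :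
    BB u f s ∈ v ↔ ∃ c ∈ s, ∃ d ∈ s, c < d ∧ CC u f c d ∈ v := by
  have hfin : {q : ℕ × ℕ | q.1 ∈ s ∧ q.2 ∈ s ∧ q.1 < q.2}.Finite := by
    refine Set.Finite.subset (Set.Finite.prod s.finite_toSet s.finite_toSet) ?_
    rintro ⟨c, d⟩ ⟨h1, h2, _⟩
    exact ⟨h1, h2⟩
  rw [BB]
  rw [Ultrafilter.finite_biUnion_mem_iff (f := v) (s := fun q : ℕ × ℕ => CC u f q.1 q.2) hfin]
  constructor
  · rintro ⟨⟨c, d⟩, ⟨h1, h2, h3⟩, h4⟩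
    exact ⟨c, h1, d, h2, h3, h4⟩
  · rintro ⟨c, h1, d, h2, h3, h4⟩
    exact ⟨(c, d), ⟨h1, h2, h3⟩, h4⟩

lemma CC_subset_BB {s : Finset ℕ} (hc : c ∈ s) (hd : d ∈ s) (hcd : c < d) :
    CC u f c d ⊆ BB u f s := by
  intro x hx
  rw [BB]
  exact Set.mem_biUnion (show (c, d) ∈ {q : ℕ × ℕ | q.1 ∈ s ∧ q.2 ∈ s ∧ q.1 < q.2}
    from ⟨hc, hd, hcd⟩) hx

variable (u f) in
/-- Goodness of a finite set. -/
def OKp (s : Finset ℕ) : Prop :=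
  ∀ c ∈ s, ∀ d ∈ s, c < d → (f c d ≠ ww u f ∧ ∀ a ∈ s, CC u f c d ∉ zz u f a)

variable (u f) in
noncomputable def XX (s : Finset ℕ) : Set ℕ :=
  if OKp u f s then {m | (∀ a ∈ s, (BB u f s)ᶜ ∈ f a m) ∧ BB u f s ∉ zz u f m}
  else Set.univ

lemma XX_mem (s : Finset ℕ) : XX u f s ∈ u := by
  unfold XX
  split
  · rename_i hOK
    have hBz : ∀ a ∈ s, BB u f s ∉ zz u f a := by
      intro a ha hmem
      obtain ⟨c, hc, d, hd, hcd, hCC⟩ := (mem_BB_iff _).mp hmem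
      exact (hOK c hc d hd hcd).2 a ha hCC
    have h1 : {m | ∀ a ∈ s, (BB u f s)ᶜ ∈ f a m} ∈ u := by
      have : {m | ∀ a ∈ s, (BB u f s)ᶜ ∈ f a m} = ⋂ a ∈ s, {m | (BB u f s)ᶜ ∈ f a m} := by
        ext m; simp
      rw [this]
      refine (Filter.biInter_finset_mem _).mpr fun a ha => ?_
      have : (BB u f s)ᶜ ∈ zz u f a := (Ultrafilter.compl_mem_iff_notMem).mpr (hBz a ha)
      exact (mem_zz u f).mp this
    have h2 : {m | BB u f s ∉ zz u f m} ∈ u := by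
      have hw : BB u f s ∉ ww u f := by
        intro hmem
        obtain ⟨c, hc, d, hd, hcd, hCC⟩ := (mem_BB_iff _).mp hmem
        exact CC_not_ww (hOK c hc d hd hcd).1 hCC
      have hcompl : {m | BB u f s ∈ zz u f m}ᶜ ∈ u :=
        (Ultrafilter.compl_mem_iff_notMem).mpr (fun hc => hw ((mem_ww u f).mpr hc))
      simpa [Set.compl_setOf] using hcompl
    have : {m | (∀ a ∈ s, (BB u f s)ᶜ ∈ f a m) ∧ BB u f s ∉ zz u f m}
        = {m | ∀ a ∈ s, (BB u f s)ᶜ ∈ f a m} ∩ {m | BB u f s ∉ zz u f m} := rfl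
    rw [this]
    exact u.inter_mem h1 h2
  · exact Filter.univ_mem

lemma XX_pos {s : Finset ℕ} (h : OKp u f s) :
    XX u f s = {m | (∀ a ∈ s, (BB u f s)ᶜ ∈ f a m) ∧ BB u f s ∉ zz u f m} := by
  unfold XX
  exact if_pos h

end Aux

/-- Every Ramsey ultrafilter is `(βω, 2)`-discrete. -/
theorem ramsey_is_beta_omega_two_discrete (u : Ultrafilter ℕ) (hu : IsRamsey u)
    (f : ℕ → ℕ → Ultrafilter ℕ)
    (hinj : ∀ n m n' m' : ℕ, n < m → n' < m' → f n m = f n' m' → n = n' ∧ m = m') :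
    ∃ M ∈ u, IsDiscreteSubset {y : Ultrafilter ℕ | ∃ n ∈ M, ∃ m ∈ M, n < m ∧ y = f n m} := by
  classical
  have hfree := hu.1
  have hcof : ∀ A : Set ℕ, Aᶜ.Finite → A ∈ u := by
    intro A hA
    have h := (Ultrafilter.compl_mem_iff_notMem (s := Aᶜ)).mpr (hfree _ hA)
    simpa using h
  have hsub_notmem : ∀ A : Set ℕ, A.Subsingleton → A ∉ u := fun A hA => hfree A hA.finite
  set T : ℕ → Set ℕ := fun c => {m | c < m ∧ f c m = zz u f m} with hTdef
  have hTsub : {c | T c ∈ u}.Subsingleton := by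
    intro c hc c' hc'
    obtain ⟨m, hm1, hm2⟩ := Ultrafilter.nonempty_of_mem (u.inter_mem hc hc')
    exact (hinj c m c' m hm1.1 hm2.1 (hm1.2.trans hm2.2.symm)).1
  have hU0 : {c | T c ∉ u} ∈ u := by
    refine hcof _ ?_
    have h : {c | T c ∉ u}ᶜ = {c | T c ∈ u} := by ext c; simp
    rw [h]; exact hTsub.finite
  have hW1 : ∀ c : ℕ, {m | c < m ∧ f c m = ww u f} ∉ u := by
    intro c
    refine hsub_notmem _ fun m hm m' hm' => ?_
    exact (hinj c m c m' hm.1 hm'.1 (hm.2.trans hm'.2.symm)).2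
  have hZ1 : ∀ c k : ℕ, {m | c < m ∧ f c m = zz u f k} ∉ u := by
    intro c k
    refine hsub_notmem _ fun m hm m' hm' => ?_
    exact (hinj c m c m' hm.1 hm'.1 (hm.2.trans hm'.2.symm)).2
  set Y : ℕ → Set ℕ := fun n =>
    {m | n < m} ∩
    ({m | ∀ c ≤ n, c < m → f c m ≠ ww u f} ∩
     ({m | ∀ c ≤ n, ∀ k ≤ n, c < m → f c m ≠ zz u f k} ∩
      ({m | ∀ c ≤ n, T c ∉ u → c < m → f c m ≠ zz u f m} ∩
       ⋂ s ∈ (Finset.range (n+1)).powerset, XX u f s))) with hYdef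
  have hY : ∀ n, Y n ∈ u := by
    intro n
    refine u.inter_mem ?_ (u.inter_mem ?_ (u.inter_mem ?_ (u.inter_mem ?_ ?_)))
    · refine hcof _ ?_
      have h : {m | n < m}ᶜ = Set.Iic n := by ext m; simp [Set.mem_Iic]
      rw [h]; exact Set.finite_Iic n
    · have h : {m | ∀ c ≤ n, c < m → f c m ≠ ww u f}
          = ⋂ c ∈ Finset.range (n+1), {m | c < m ∧ f c m = ww u f}ᶜ := by
        ext m
        simp only [Set.mem_iInter, Finset.mem_range, Nat.lt_succ_iff, Set.mem_compl_iff,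
          Set.mem_setOf_eq, not_and]
      rw [h]
      exact (Filter.biInter_finset_mem _).mpr fun c _ =>
        (Ultrafilter.compl_mem_iff_notMem).mpr (hW1 c)
    · have h : {m | ∀ c ≤ n, ∀ k ≤ n, c < m → f c m ≠ zz u f k}
          = ⋂ c ∈ Finset.range (n+1), ⋂ k ∈ Finset.range (n+1),
              {m | c < m ∧ f c m = zz u f k}ᶜ := by
        ext m
        simp only [Set.mem_iInter, Finset.mem_range, Nat.lt_succ_iff, Set.mem_compl_iff,
          Set.mem_setOf_eq, not_and]
      rw [h]
      exact (Filter.biInter_finset_mem _).mpr fun c _ =>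
        (Filter.biInter_finset_mem _).mpr fun k _ =>
          (Ultrafilter.compl_mem_iff_notMem).mpr (hZ1 c k)
    · have h : {m | ∀ c ≤ n, T c ∉ u → c < m → f c m ≠ zz u f m}
          = ⋂ c ∈ Finset.range (n+1), {m | T c ∉ u → c < m → f c m ≠ zz u f m} := by
        ext m
        simp only [Set.mem_iInter, Finset.mem_range, Nat.lt_succ_iff, Set.mem_setOf_eq]
      rw [h]
      refine (Filter.biInter_finset_mem _).mpr fun c _ => ?_
      by_cases hc : T c ∈ u
      · have h2 : {m | T c ∉ u → c < m → f c m ≠ zz u f m} = Set.univ := by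
          ext m; simp [hc]
        rw [h2]; exact Filter.univ_mem
      · have h2 : (T c)ᶜ ⊆ {m | T c ∉ u → c < m → f c m ≠ zz u f m} := by
          intro m hm _ h3 h4
          exact hm ⟨h3, h4⟩
        exact Filter.mem_of_superset ((Ultrafilter.compl_mem_iff_notMem).mpr hc) h2
    · exact (Filter.biInter_finset_mem _).mpr fun s _ => XX_mem s
  obtain ⟨M₀, hM₀, hdiag₀⟩ := ramsey_diag u hu Y hY
  set M : Set ℕ := M₀ ∩ {c | T c ∉ u} with hMdef
  have hM : M ∈ u := u.inter_mem hM₀ hU0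
  have hdiag : ∀ n ∈ M, ∀ m ∈ M, n < m → m ∈ Y n := fun n hn m hm h => hdiag₀ n hn.1 m hm.1 h
  have hYunpack : ∀ n m, m ∈ Y n →
      (n < m ∧ (∀ c ≤ n, c < m → f c m ≠ ww u f) ∧
       (∀ c ≤ n, ∀ k ≤ n, c < m → f c m ≠ zz u f k) ∧
       (∀ c ≤ n, T c ∉ u → c < m → f c m ≠ zz u f m) ∧
       ∀ s ∈ (Finset.range (n+1)).powerset, m ∈ XX u f s) := by
    intro n m hm
    obtain ⟨h1, h2, h3, h4, h5⟩ := hm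
    exact ⟨h1, h2, h3, h4, fun s hs => Set.mem_iInter₂.mp h5 s hs⟩
  set seg : ℕ → Finset ℕ := fun m => (Finset.range m).filter (fun x => x ∈ M) with hsegdef
  have hseg_mem : ∀ x m : ℕ, x ∈ seg m ↔ x < m ∧ x ∈ M := by
    intro x m
    simp [hsegdef, Finset.mem_filter, Finset.mem_range, and_comm]
  have hOK : ∀ m, OKp u f (seg m) := by
    intro m
    induction m with
    | zero =>
      intro c hc d hd hcd
      rw [hseg_mem] at hc
      exact absurd hc.1 (Nat.not_lt_zero c)
    | succ m ih =>
      by_cases hmM : m ∈ M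
      · have hsegS : ∀ x, x ∈ seg (m+1) ↔ x = m ∨ x ∈ seg m := by
          intro x
          rw [hseg_mem, hseg_mem]
          constructor
          · rintro ⟨h1, h2⟩
            rcases Nat.lt_succ_iff_lt_or_eq.mp h1 with h | h
            · exact Or.inr ⟨h, h2⟩
            · exact Or.inl h
          · rintro (h | ⟨h1, h2⟩)
            · rw [h]; exact ⟨Nat.lt_succ_self m, hmM⟩
            · exact ⟨Nat.lt_succ_of_lt h1, h2⟩
        intro c hc d hd hcd
        rw [hsegS] at hc hd
        -- basic facts about elements of seg m
        have hseg_lt : ∀ x, x ∈ seg m → x < m := fun x hx => ((hseg_mem x m).mp hx).1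
        have hseg_M : ∀ x, x ∈ seg m → x ∈ M := fun x hx => ((hseg_mem x m).mp hx).2
        rcases hc with hc0 | hc
        · -- c = m, then d > m, impossible
          exfalso
          rcases hd with hd0 | hd
          · omega
          · have := hseg_lt _ hd
            omega
        · rcases hd with hd0 | hd
          · -- d = m : new pair (c, m)
            rw [hd0] at hcd ⊢
            have hcM : c ∈ M := hseg_M c hc
            have hcm : c < m := hseg_lt c hc
            have hYc := hYunpack c m (hdiag c hcM m hmM hcm)
            constructor
            · exact hYc.2.1 c le_rfl hcm
            · intro a ha
              rw [hsegS] at ha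
              rcases ha with ha0 | ha
              · -- a = m
                rw [ha0]
                refine CC_not_zz le_rfl ?_
                exact fun h => (hYc.2.2.2.1 c le_rfl hcM.2 hcm) h.symm
              · -- a ∈ seg m
                have haM : a ∈ M := hseg_M a ha
                have ham : a < m := hseg_lt a ha
                have hNM : max c a ∈ M := by
                  rcases max_choice c a with h | h
                  · rw [h]; exact hcM
                  · rw [h]; exact haM
                have hNm : max c a < m := max_lt hcm ham
                have hYN := hYunpack (max c a) m (hdiag _ hNM m hmM hNm)
                refine CC_not_zz (le_of_lt ham) ?_
                exact fun h => (hYN.2.2.1 c (le_max_left c a) a (le_max_right c a) hcm) h.symm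
          · -- c, d ∈ seg m : old pair
            have hold := ih c hc d hd hcd
            constructor
            · exact hold.1
            · intro a ha
              rw [hsegS] at ha
              rcases ha with ha0 | ha
              · -- a = m : use m ∈ XX (seg m)
                rw [ha0]
                have hcM : c ∈ M := hseg_M c hc
                have hcm : c < m := hseg_lt c hc
                have hne : (seg m).Nonempty := ⟨c, hc⟩
                have hN := (seg m).max'_mem hne
                have hNM : (seg m).max' hne ∈ M := hseg_M _ hN
                have hNm : (seg m).max' hne < m := hseg_lt _ hN
                have hYN := hYunpack _ m (hdiag _ hNM m hmM hNm)
                have hpow : seg m ∈ (Finset.range ((seg m).max' hne + 1)).powerset := by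
                  rw [Finset.mem_powerset]
                  intro x hx
                  exact Finset.mem_range.mpr (Nat.lt_succ_of_le ((seg m).le_max' x hx))
                have hx := hYN.2.2.2.2 (seg m) hpow
                rw [XX_pos ih] at hx
                intro hmem
                exact hx.2 (Filter.mem_of_superset hmem (CC_subset_BB hc hd hcd))
              · exact hold.2 a ha
      · have hsegS : seg (m+1) = seg m := by
          apply Finset.ext
          intro x
          rw [hseg_mem, hseg_mem]
          constructor
          · rintro ⟨h1, h2⟩
            rcases Nat.lt_succ_iff_lt_or_eq.mp h1 with h | h
            · exact ⟨h, h2⟩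
            · exact absurd (h ▸ h2) hmM
          · rintro ⟨h1, h2⟩
            exact ⟨Nat.lt_succ_of_lt h1, h2⟩
        rw [hsegS]
        exact ih
  have hA : ∀ n ∈ M, ∀ m ∈ M, n < m → (CC u f n m ∩ (BB u f (seg m))ᶜ) ∈ f n m := by
    intro n hn m hm hnm
    have hn' : n ∈ seg m := (hseg_mem n m).mpr ⟨hnm, hn⟩
    have hne : (seg m).Nonempty := ⟨n, hn'⟩
    have hN := (seg m).max'_mem hne
    have hNM : (seg m).max' hne ∈ M := ((hseg_mem _ m).mp hN).2
    have hNm : (seg m).max' hne < m := ((hseg_mem _ m).mp hN).1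
    have hYN := hYunpack _ m (hdiag _ hNM m hm hNm)
    have hpow : seg m ∈ (Finset.range ((seg m).max' hne + 1)).powerset := by
      rw [Finset.mem_powerset]
      intro x hx
      exact Finset.mem_range.mpr (Nat.lt_succ_of_le ((seg m).le_max' x hx))
    have hx := hYN.2.2.2.2 (seg m) hpow
    rw [XX_pos (hOK m)] at hx
    exact Filter.inter_mem (CC_mem hinj hnm) (hx.1 n hn')
  refine ⟨M, hM, ?_⟩
  intro d hd
  obtain ⟨n, hn, m, hm, hnm, rfl⟩ := hd
  refine ⟨{y : Ultrafilter ℕ | CC u f n m ∩ (BB u f (seg m))ᶜ ∈ y},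
    ultrafilter_isOpen_basic _, ?_⟩
  ext y
  simp only [Set.mem_inter_iff, Set.mem_setOf_eq, Set.mem_singleton_iff]
  constructor
  · rintro ⟨hyU, n', hn', m', hm', hnm', rfl⟩
    by_cases heq : n' = n ∧ m' = m
    · rw [heq.1, heq.2]
    · exfalso
      have hy' := hA n' hn' m' hm' hnm'
      have hempty : (CC u f n m ∩ (BB u f (seg m))ᶜ) ∩ (CC u f n' m' ∩ (BB u f (seg m'))ᶜ)
          = ∅ := by
        rw [Set.eq_empty_iff_forall_notMem]
        rintro x ⟨⟨hx1, hx2⟩, hx3, hx4⟩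
        rcases lt_trichotomy m' m with h | h | h
        · have hs : CC u f n' m' ⊆ BB u f (seg m) :=
            CC_subset_BB ((hseg_mem n' m).mpr ⟨lt_trans hnm' h, hn'⟩)
              ((hseg_mem m' m).mpr ⟨h, hm'⟩) hnm'
          exact hx2 (hs hx3)
        · subst h
          have hne : n ≠ n' := fun he => heq ⟨he.symm, rfl⟩
          have := CC_disj (u := u) (f := f) hnm hnm' hne
          rw [Set.eq_empty_iff_forall_notMem] at this
          exact this x ⟨hx1, hx3⟩
        · have hs : CC u f n m ⊆ BB u f (seg m') :=
            CC_subset_BB ((hseg_mem n m').mpr ⟨lt_trans hnm h, hn⟩)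
              ((hseg_mem m m').mpr ⟨h, hm⟩) hnm
          exact hx4 (hs hx1)
      have hmem := (f n' m').inter_mem hyU hy'
      rw [hempty] at hmem
      exact Filter.empty_notMem (f n' m' : Filter ℕ) hmem
  · rintro rfl
    exact ⟨hA n hn m hm hnm, n, hn, m, hm, hnm, rfl⟩
end
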